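/- arXiv:1101.0311 — 2 statements merged into one kernel-verified Lean document; each statement's English description precedes it below -/
import Mathlib

section
/- Let x ∈ (0,1) be irrational, and set a₁ = ⌊1/x⌋ and a₂ = ⌊1/G(x)⌋ where G(x) = 1/x - ⌊1/x⌋. Then the denominator ((a₂-a₁)(1+a₁a₂))·x + 1 + a₂(a₁-a₂) is nonzero and S₁₂(x) = ((1 + a₁(a₂-a₁))·x + (a₁-a₂)) / ((a₂-a₁)(1+a₁a₂)·x + 1 + a₂(a₁-a₂)). -/
/-- The Gauss map `G(x) = 1/x - ⌊1/x⌋`. -/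
noncomputable def gaussMap (x : ℝ) : ℝ := 1 / x - ⌊1 / x⌋

/-- The first-two-digit swap map of continued fractions:
`S₁₂(x) = 1/(a₂ + 1/(a₁ + G(G(x))))` with `a₁ = ⌊1/x⌋`, `a₂ = ⌊1/G(x)⌋`. -/
noncomputable def S12 (x : ℝ) : ℝ :=
  1 / ((⌊1 / gaussMap x⌋ : ℝ) + 1 / ((⌊1 / x⌋ : ℝ) + gaussMap (gaussMap x)))

/-! With `z = G(G(x))` one has `x = [a₁, a₂ + z] = (a₂ + z) / (a₁(a₂ + z) + 1)` and
`S₁₂(x) = [a₂, a₁ + z] = (a₁ + z) / (a₂(a₁ + z) + 1)`. Eliminating `z` between the two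
gives the Möbius map; its denominator at `x` equals `(a₂(a₁ + z) + 1) / (a₁(a₂ + z) + 1) > 0`. -/

lemma floor_add_gaussMap (x : ℝ) : (⌊1 / x⌋ : ℝ) + gaussMap x = 1 / x := by
  rw [gaussMap, add_sub_cancel]

lemma gaussMap_lt_one (x : ℝ) : gaussMap x < 1 :=
  Int.fract_lt_one (1 / x)

lemma irrational_gaussMap {x : ℝ} (hx : Irrational x) : Irrational (gaussMap x) :=
  (one_div x ▸ hx.inv).sub_intCast _

lemma gaussMap_pos_of_irrational {x : ℝ} (hx : Irrational x) : 0 < gaussMap x :=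
  (Int.fract_nonneg (1 / x)).lt_of_ne (irrational_gaussMap hx).ne_zero.symm

lemma one_le_floor_one_div {x : ℝ} (hx₀ : 0 < x) (hx₁ : x ≤ 1) : 1 ≤ ⌊1 / x⌋ :=
  Int.le_floor.mpr (by exact_mod_cast (one_le_div hx₀).mpr hx₁)

lemma one_div_add_one_div_eq_div {K : Type*} [Field K] (a u : K) (hu : u ≠ 0) :
    1 / (a + 1 / u) = u / (a * u + 1) := by
  field_simp

section SwapMobius

variable {K : Type*} [Field K] {a b x z : K}

lemma swap_mobius_denom_mul (hx : x * (a * (b + z) + 1) = b + z) :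
    ((b - a) * (1 + a * b) * x + 1 + b * (a - b)) * (a * (b + z) + 1) = b * (a + z) + 1 := by
  linear_combination (b - a) * (1 + a * b) * hx

lemma swap_mobius_numer_mul (hx : x * (a * (b + z) + 1) = b + z) :
    ((1 + a * (b - a)) * x + (a - b)) * (a * (b + z) + 1) = a + z := by
  linear_combination (1 + a * (b - a)) * hx

theorem swap_mobius (hq : a * (b + z) + 1 ≠ 0) (hr : b * (a + z) + 1 ≠ 0)
    (hx : x = (b + z) / (a * (b + z) + 1)) :
    (b - a) * (1 + a * b) * x + 1 + b * (a - b) ≠ 0 ∧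
      (a + z) / (b * (a + z) + 1) =
        ((1 + a * (b - a)) * x + (a - b)) / ((b - a) * (1 + a * b) * x + 1 + b * (a - b)) := by
  have hxq : x * (a * (b + z) + 1) = b + z := by rw [hx, div_mul_cancel₀ _ hq]
  have hD := swap_mobius_denom_mul hxq
  refine ⟨fun h ↦ hr (by rw [← hD, h, zero_mul]), ?_⟩
  rw [eq_comm, ← mul_div_mul_right _ _ hq, swap_mobius_numer_mul hxq, hD]

end SwapMobius

/-- On the fundamental interval of digits `a₁, a₂`, the swap map `S₁₂` is the Möbius
transformation `x ↦ ((1+a₁(a₂-a₁))x + (a₁-a₂)) / ((a₂-a₁)(1+a₁a₂)x + 1 + a₂(a₁-a₂))`. -/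
theorem S12_eq_mobius (x : ℝ) (hx : Irrational x) (hx01 : x ∈ Set.Ioo (0 : ℝ) 1)
    (a₁ a₂ : ℤ) (ha₁ : a₁ = ⌊1 / x⌋) (ha₂ : a₂ = ⌊1 / gaussMap x⌋) :
    ((a₂ - a₁ : ℝ) * (1 + a₁ * a₂)) * x + 1 + (a₂ : ℝ) * (a₁ - a₂) ≠ 0 ∧
      S12 x = ((1 + (a₁ : ℝ) * (a₂ - a₁)) * x + ((a₁ : ℝ) - a₂)) /
        (((a₂ - a₁ : ℝ) * (1 + a₁ * a₂)) * x + 1 + (a₂ : ℝ) * (a₁ - a₂)) := by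
  have hy := gaussMap_pos_of_irrational hx
  have hz := gaussMap_pos_of_irrational (irrational_gaussMap hx)
  have h₁ : (1 : ℝ) ≤ a₁ := by exact_mod_cast ha₁ ▸ one_le_floor_one_div hx01.1 hx01.2.le
  have h₂ : (1 : ℝ) ≤ a₂ := by exact_mod_cast ha₂ ▸ one_le_floor_one_div hy (gaussMap_lt_one x).le
  have hx_cf : x = 1 / (a₁ + 1 / (a₂ + gaussMap (gaussMap x))) := by
    rw [ha₁, ha₂, floor_add_gaussMap, one_div_one_div, floor_add_gaussMap, one_div_one_div]
  have hS : S12 x = 1 / (a₂ + 1 / (a₁ + gaussMap (gaussMap x))) := by rw [S12, ha₁, ha₂]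
  rw [one_div_add_one_div_eq_div _ _ (by positivity)] at hx_cf hS
  rw [hS]
  exact swap_mobius (by positivity) (by positivity) hx_cf
end

section
/- Let x ∈ (0,1) be irrational and let a₁, a₂ be positive integers. Then ⌊1/x⌋ = a₁ and ⌊1/G(x)⌋ = a₂ hold if and only if a₂/(1 + a₁a₂) < x < (1+a₂)/(1 + a₁ + a₁a₂), where G(x) = 1/x - ⌊1/x⌋. -/
lemma gaussMap_eq_fract (x : ℝ) : gaussMap x = Int.fract (1 / x) := rfl

namespace Irrational

variable {t : ℝ}

lemma one_div (ht : Irrational t) : Irrational (1 / t) := by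
  simpa only [_root_.one_div] using ht.inv

lemma floor_eq_iff (ht : Irrational t) {n : ℤ} : ⌊t⌋ = n ↔ (n : ℝ) < t ∧ t < n + 1 := by
  rw [Int.floor_eq_iff, (ht.ne_int n).symm.le_iff_lt]

lemma floor_one_div_eq_iff (ht : Irrational t) (ht₀ : 0 < t) {n : ℤ} (hn : 0 < n) :
    ⌊1 / t⌋ = n ↔ 1 / ((n : ℝ) + 1) < t ∧ t < 1 / n := by
  have hn' : (0 : ℝ) < n := Int.cast_pos.mpr hn
  rw [ht.one_div.floor_eq_iff, lt_one_div hn' ht₀, one_div_lt ht₀ (by positivity), and_comm]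

lemma floor_eq_and_floor_one_div_fract_eq_iff (ht : Irrational t) (a₁ : ℤ) {a₂ : ℤ}
    (ha₂ : 0 < a₂) :
    (⌊t⌋ = a₁ ∧ ⌊1 / Int.fract t⌋ = a₂) ↔
      (a₁ : ℝ) + 1 / ((a₂ : ℝ) + 1) < t ∧ t < a₁ + 1 / a₂ := by
  have hfract : Irrational (Int.fract t) := ht.sub_intCast ⌊t⌋
  have hfract₀ : 0 < Int.fract t := Int.fract_pos.mpr (ht.ne_int _)
  rw [hfract.floor_one_div_eq_iff hfract₀ ha₂]
  constructor
  · rintro ⟨rfl, hlow, hhigh⟩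
    rw [Int.fract] at hlow hhigh
    constructor <;> linarith
  · rintro ⟨hlow, hhigh⟩
    have ha₂' : (1 : ℝ) ≤ a₂ := by exact_mod_cast ha₂
    have hfloor : ⌊t⌋ = a₁ := by
      rw [ht.floor_eq_iff]
      constructor
      · linarith [show (0 : ℝ) < 1 / ((a₂ : ℝ) + 1) by positivity]
      · linarith [(div_le_one (by positivity)).mpr ha₂']
    rw [Int.fract, hfloor]
    exact ⟨rfl, by linarith, by linarith⟩

end Irrational

lemma one_div_add_one_div_eq {K : Type*} [Field K] (a : K) {b : K} (hb : b ≠ 0) :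
    1 / (a + 1 / b) = b / (1 + a * b) := by
  rw [show a + 1 / b = (1 + a * b) / b by field_simp; ring, one_div_div]

/-- For irrational `x ∈ (0,1)` and positive integers `a₁, a₂`: the first two continued
fraction digits of `x` are `a₁, a₂` iff `x` lies in the open interval
`(a₂/(1+a₁a₂), (1+a₂)/(1+a₁+a₁a₂))`. -/
theorem digits_iff_mem_interval (x : ℝ) (hx : Irrational x) (hx01 : x ∈ Set.Ioo (0 : ℝ) 1)
    (a₁ a₂ : ℤ) (h₁ : 0 < a₁) (h₂ : 0 < a₂) :
    (⌊1 / x⌋ = a₁ ∧ ⌊1 / gaussMap x⌋ = a₂) ↔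
      ((a₂ : ℝ) / (1 + a₁ * a₂) < x ∧ x < (1 + (a₂ : ℝ)) / (1 + a₁ + a₁ * a₂)) := by
  have hx₀ : 0 < x := hx01.1
  have ha₁ : (0 : ℝ) < a₁ := Int.cast_pos.mpr h₁
  have ha₂ : (0 : ℝ) < a₂ := Int.cast_pos.mpr h₂
  have hlow : (a₂ : ℝ) / (1 + a₁ * a₂) = 1 / (a₁ + 1 / a₂) :=
    (one_div_add_one_div_eq _ ha₂.ne').symm
  have hhigh : (1 + (a₂ : ℝ)) / (1 + a₁ + a₁ * a₂) = 1 / (a₁ + 1 / (a₂ + 1)) := by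
    rw [one_div_add_one_div_eq _ (by positivity : (a₂ : ℝ) + 1 ≠ 0)]
    ring
  rw [gaussMap_eq_fract, hx.one_div.floor_eq_and_floor_one_div_fract_eq_iff a₁ h₂,
    lt_one_div (by positivity) hx₀, one_div_lt hx₀ (by positivity), hlow, hhigh, and_comm]
end
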